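/- Let G be a group acting acylindrically on a hyperbolic geodesic metric space S, such that every cyclic subgroup of G has bounded orbits (every element is elliptic). Then G itself has bounded orbits. -/

import Mathlib

/-!
Suppose the orbit of `x` is unbounded and write `|g| = d(x, g x)`. For any `g, h` the zigzag
`x, g x, g h x, g h g x, …` is bounded because `g h` is elliptic; in a hyperbolic space a sequence
with long steps and small Gromov products at its corners is a quasi-geodesic, so one corner
product must be large. This yields `(a x, b x)_x ≥ min (|a|, |b|) / 2 - O(δ)` for all `a, b`: the
orbit funnels towards a single point at infinity. An elliptic `g` then changes distances to far
orbit points by only `O(δ)`, since the increments of `k ↦ d(gᵏ x, w x)` all approximate the same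
number yet stay bounded. Consequently every `g` moves by `O(δ)` the points of a geodesic from `x`
to a far orbit point `w x` lying beyond distance `|g| / 2` from `x`. Taking `N + 1` elements of
`G` and two such points at distance `R` contradicts acylindricity.
-/

open Bornology

/-- A geodesic segment from `x` to `y`, parametrized by arc length on `[0, dist x y]`. -/
def IsGeodesicSeg {S : Type*} [MetricSpace S] (f : ℝ → S) (x y : S) : Prop :=
  f 0 = x ∧ f (dist x y) = y ∧
    ∀ s ∈ Set.Icc (0:ℝ) (dist x y), ∀ t ∈ Set.Icc (0:ℝ) (dist x y),
      dist (f s) (f t) = |s - t|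

/-- A metric space is geodesic if any two points are joined by a geodesic segment. -/
def GeodesicMetricSpace (S : Type*) [MetricSpace S] : Prop :=
  ∀ x y : S, ∃ f : ℝ → S, IsGeodesicSeg f x y

/-- Rips condition: every side of a geodesic triangle lies in the union of the
δ-neighbourhoods of the other two sides. -/
def RipsHyperbolic (S : Type*) [MetricSpace S] (δ : ℝ) : Prop :=
  ∀ (x y z : S) (f g h : ℝ → S), IsGeodesicSeg f x y → IsGeodesicSeg g y z →
    IsGeodesicSeg h x z →
    ∀ s ∈ Set.Icc (0:ℝ) (dist x y),
      (∃ t ∈ Set.Icc (0:ℝ) (dist y z), dist (f s) (g t) ≤ δ) ∨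
      (∃ t ∈ Set.Icc (0:ℝ) (dist x z), dist (f s) (h t) ≤ δ)

/-- The Gromov product `(x,y)_t`. -/
noncomputable def gromov {S : Type*} [MetricSpace S] (x y t : S) : ℝ :=
  (dist x t + dist y t - dist x y) / 2

/-- Acylindricity of an isometric action of `G` on `S`. -/
def AcylindricalAction (G S : Type*) [Group G] [MetricSpace S] [MulAction G S] : Prop :=
  ∀ ε : ℝ, 0 < ε → ∃ R : ℝ, ∃ N : ℕ, 0 < R ∧
    ∀ x y : S, dist x y ≥ R →
      {g : G | dist x (g • x) ≤ ε ∧ dist y (g • y) ≤ ε}.Finite ∧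
      {g : G | dist x (g • x) ≤ ε ∧ dist y (g • y) ≤ ε}.ncard ≤ N

/-- `g` is loxodromic: some orbit map `n ↦ gⁿ • s` is a quasi-isometric embedding of ℤ. -/
def Loxodromic {G S : Type*} [Group G] [MetricSpace S] [MulAction G S] (g : G) : Prop :=
  ∃ s : S, ∃ lam C : ℝ, 1 ≤ lam ∧ 0 ≤ C ∧ ∀ m n : ℤ,
    lam⁻¹ * |(m : ℝ) - (n : ℝ)| - C ≤ dist ((g ^ m) • s) ((g ^ n) • s) ∧
    dist ((g ^ m) • s) ((g ^ n) • s) ≤ lam * |(m : ℝ) - (n : ℝ)| + C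

open Filter Set

lemma abs_le_of_abs_sub_sub_le_of_abs_sub_le {φ : ℕ → ℝ} {B c D : ℝ}
    (hstep : ∀ k, |φ (k + 1) - φ k - B| ≤ c) (hbdd : ∀ n, |φ n - φ 0| ≤ D) : |B| ≤ c := by
  have hsum : ∀ n : ℕ, |φ n - φ 0 - n * B| ≤ n * c := by
    intro n
    induction n with
    | zero => simp
    | succ n ih =>
      calc |φ (n + 1) - φ 0 - (n + 1 : ℕ) * B|
          = |(φ (n + 1) - φ n - B) + (φ n - φ 0 - n * B)| := by push_cast; ring_nf
        _ ≤ c + n * c := (abs_add_le _ _).trans (add_le_add (hstep n) ih)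
        _ = (n + 1 : ℕ) * c := by push_cast; ring
  by_contra! hlt
  obtain ⟨n, hn⟩ := exists_nat_gt (D / (|B| - c))
  rw [div_lt_iff₀ (sub_pos.2 hlt)] at hn
  have hnB : |(n : ℝ) * B| ≤ D + n * c := by
    have h1 := abs_le.1 (hsum n)
    have h2 := abs_le.1 (hbdd n)
    exact abs_le.2 ⟨by linarith, by linarith⟩
  rw [abs_mul, Nat.abs_cast] at hnB
  linarith

section

variable {S : Type*} [MetricSpace S] {δ : ℝ}

lemma gromov_comm (x y t : S) : gromov x y t = gromov y x t := by
  unfold gromov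
  rw [dist_comm x y, add_comm (dist x t)]

lemma gromov_nonneg (x y t : S) : 0 ≤ gromov x y t := by
  unfold gromov
  linarith [dist_triangle x t y, dist_comm t y]

lemma gromov_le_dist (x y t : S) : gromov x y t ≤ dist x t := by
  unfold gromov
  linarith [dist_triangle y x t, dist_comm x y]

lemma gromov_mem_Icc (x y p : S) : gromov y p x ∈ Icc 0 (dist x y) :=
  ⟨gromov_nonneg y p x, (gromov_le_dist y p x).trans_eq (dist_comm y x)⟩

namespace IsGeodesicSeg

variable {f : ℝ → S} {x y : S} {s : ℝ}

lemma dist_left (hf : IsGeodesicSeg f x y) (hs : s ∈ Icc 0 (dist x y)) : dist x (f s) = s := by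
  have h := hf.2.2 0 ⟨le_rfl, dist_nonneg⟩ s hs
  rwa [hf.1, zero_sub, abs_neg, abs_of_nonneg hs.1] at h

lemma dist_right (hf : IsGeodesicSeg f x y) (hs : s ∈ Icc 0 (dist x y)) :
    dist (f s) y = dist x y - s := by
  have h := hf.2.2 s hs (dist x y) ⟨dist_nonneg, le_rfl⟩
  rwa [hf.2.1, abs_sub_comm, abs_of_nonneg (sub_nonneg.2 hs.2)] at h

lemma gromov_le_dist_apply (hf : IsGeodesicSeg f x y) (hs : s ∈ Icc 0 (dist x y)) (p : S) :
    gromov x y p ≤ dist p (f s) := by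
  unfold gromov
  linarith [hf.dist_left hs, hf.dist_right hs, dist_triangle x (f s) p,
    dist_triangle y (f s) p, dist_comm y (f s), dist_comm (f s) p]

lemma smul {G : Type*} [Group G] [MulAction G S] [IsIsometricSMul G S]
    (hf : IsGeodesicSeg f x y) (c : G) :
    IsGeodesicSeg (fun s => c • f s) (c • x) (c • y) := by
  simp only [IsGeodesicSeg, dist_smul]
  exact ⟨by rw [hf.1], by rw [hf.2.1], hf.2.2⟩

end IsGeodesicSeg

def GromovHyperbolic (S : Type*) [MetricSpace S] (δ : ℝ) : Prop :=
  ∀ p a b c : S, min (gromov a b p) (gromov b c p) ≤ gromov a c p + δ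

namespace RipsHyperbolic

lemma nonneg (hS : RipsHyperbolic S δ) (x : S) : 0 ≤ δ := by
  have hc : IsGeodesicSeg (fun _ => x) x x := by
    refine ⟨rfl, rfl, fun s hs t ht => ?_⟩
    rw [dist_self] at hs ht ⊢
    rw [le_antisymm hs.2 hs.1, le_antisymm ht.2 ht.1, sub_zero, abs_zero]
  rcases hS x x x _ _ _ hc hc hc 0 ⟨le_rfl, dist_nonneg⟩ with ⟨t, -, ht⟩ | ⟨t, -, ht⟩ <;>
    exact dist_nonneg.trans ht

lemma dist_apply_gromov_le (hS : RipsHyperbolic S δ) (hgeo : GeodesicMetricSpace S)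
    {f : ℝ → S} {x y : S} (hf : IsGeodesicSeg f x y) (p : S) :
    dist p (f (gromov y p x)) ≤ gromov x y p + 2 * δ := by
  obtain ⟨g, hg⟩ := hgeo y p
  obtain ⟨h, hh⟩ := hgeo x p
  have hs := gromov_mem_Icc x y p
  have hx := hf.dist_left hs
  have hy := hf.dist_right hs
  set s := gromov y p x with hs_def
  unfold gromov at hs_def ⊢
  rcases hS x y p f g h hf hg hh s hs with ⟨τ, hτ, hclose⟩ | ⟨τ, hτ, hclose⟩
  · linarith [hg.dist_left hτ, hg.dist_right hτ, dist_triangle p (g τ) (f s),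
      dist_triangle y (g τ) (f s), dist_comm p (g τ), dist_comm (g τ) (f s), dist_comm y (f s),
      dist_comm y x, dist_comm p x]
  · linarith [hh.dist_left hτ, hh.dist_right hτ, dist_triangle p (h τ) (f s),
      dist_triangle x (h τ) (f s), dist_comm p (h τ), dist_comm (h τ) (f s),
      dist_comm y x, dist_comm p x]

lemma gromovHyperbolic (hS : RipsHyperbolic S δ) (hgeo : GeodesicMetricSpace S) :
    GromovHyperbolic S (3 * δ) := by
  intro p a b c
  obtain ⟨f, hf⟩ := hgeo a c
  obtain ⟨g, hg⟩ := hgeo c b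
  obtain ⟨h, hh⟩ := hgeo a b
  have hp := hS.dist_apply_gromov_le hgeo hf p
  rcases hS a c b f g h hf hg hh _ (gromov_mem_Icc a c p) with ⟨τ, hτ, hclose⟩ | ⟨τ, hτ, hclose⟩
  · have hbc := hg.gromov_le_dist_apply hτ p
    rw [gromov_comm] at hbc
    linarith [min_le_right (gromov a b p) (gromov b c p), dist_triangle p (f (gromov c p a)) (g τ)]
  · linarith [hh.gromov_le_dist_apply hτ p, min_le_left (gromov a b p) (gromov b c p),
      dist_triangle p (f (gromov c p a)) (h τ)]

lemma dist_apply_le_of_abs_sub_le (hS : RipsHyperbolic S δ) (hgeo : GeodesicMetricSpace S)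
    {f : ℝ → S} {x y p : S} {t a : ℝ} (hf : IsGeodesicSeg f x y) (ht : t ∈ Icc 0 (dist x y))
    (hx : |dist p x - t| ≤ a) (hy : |dist p y - (dist x y - t)| ≤ a) :
    dist p (f t) ≤ 2 * a + 2 * δ := by
  have hs := gromov_mem_Icc x y p
  rw [abs_le] at hx hy
  have hst : |gromov y p x - t| ≤ a := by
    unfold gromov
    rw [abs_le]
    constructor <;> linarith [dist_comm y x, dist_comm p y]
  have hxy : gromov x y p ≤ a := by
    unfold gromov
    linarith [dist_comm p x, dist_comm p y]
  calc dist p (f t) ≤ dist p (f (gromov y p x)) + dist (f (gromov y p x)) (f t) :=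
        dist_triangle _ _ _
    _ ≤ (gromov x y p + 2 * δ) + a :=
        add_le_add (hS.dist_apply_gromov_le hgeo hf p) ((hf.2.2 _ hs t ht).trans_le hst)
    _ ≤ 2 * a + 2 * δ := by linarith

end RipsHyperbolic

namespace GromovHyperbolic

lemma nonneg (hS : GromovHyperbolic S δ) (x : S) : 0 ≤ δ := by
  simpa [gromov] using hS x x x x

lemma dist_le_of_le_gromov (hS : GromovHyperbolic S δ) {x v y z : S}
    (hv : dist x v + dist v z = dist x z) (h : dist x v ≤ gromov y z x) :
    dist v y ≤ dist x y - dist x v + 2 * δ := by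
  have h4 := hS x v z y
  have hvz : gromov v z x = dist x v := by
    unfold gromov
    linarith [dist_comm v x, dist_comm z x]
  rw [hvz, gromov_comm z y, min_eq_left h] at h4
  unfold gromov at h4
  linarith [dist_comm v x, dist_comm y x]

lemma abs_sub_gromov_le (hS : GromovHyperbolic S δ) {p a z₁ z₂ : S}
    (h : dist p a ≤ gromov z₁ z₂ p) : |gromov a z₁ p - gromov a z₂ p| ≤ δ := by
  have h₁ := hS p a z₂ z₁
  have h₂ := hS p a z₁ z₂
  have ha₁ := gromov_le_dist a z₁ p
  have ha₂ := gromov_le_dist a z₂ p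
  rw [gromov_comm z₂ z₁, min_eq_left (by linarith [dist_comm p a])] at h₁
  rw [min_eq_left (by linarith [dist_comm p a])] at h₂
  rw [abs_le]
  constructor <;> linarith

lemma le_dist_of_chain (hS : GromovHyperbolic S δ) {z : ℕ → S} {A : ℝ}
    (hturn : ∀ k, gromov (z k) (z (k + 2)) (z (k + 1)) ≤ A)
    (hstep : ∀ k, 2 * A + 2 * δ + 1 ≤ dist (z k) (z (k + 1))) (n : ℕ) :
    (n : ℝ) ≤ dist (z 0) (z n) := by
  have hδ := hS.nonneg (z 0)
  have hA : 0 ≤ A := (gromov_nonneg _ _ _).trans (hturn 0)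
  have key : ∀ n : ℕ, (n : ℝ) + 1 ≤ dist (z 0) (z (n + 1)) ∧
      gromov (z 0) (z (n + 2)) (z (n + 1)) ≤ A + δ := by
    intro n
    induction n with
    | zero => exact ⟨by push_cast; linarith [hstep 0], by linarith [hturn 0]⟩
    | succ n ih =>
      obtain ⟨hfar, hcorner⟩ := ih
      have hstep' : 2 * A + 2 * δ + 1 ≤ dist (z (n + 1)) (z (n + 2)) := hstep (n + 1)
      have hturn' : gromov (z (n + 1)) (z (n + 3)) (z (n + 2)) ≤ A := hturn (n + 1)
      refine ⟨?_, ?_⟩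
      · unfold gromov at hcorner
        push_cast
        linarith [dist_comm (z (n + 2)) (z (n + 1))]
      · rcases min_le_iff.1 (hS (z (n + 2)) (z (n + 1)) (z 0) (z (n + 3))) with h | h
        · unfold gromov at h hcorner hturn'
          linarith [dist_comm (z (n + 2)) (z (n + 1)), dist_comm (z 0) (z (n + 1))]
        · linarith
  cases n with
  | zero => simp
  | succ n => exact_mod_cast (key n).1

end GromovHyperbolic

lemma RipsHyperbolic.dist_apply_apply_le (hS : RipsHyperbolic S δ) (hgeo : GeodesicMetricSpace S)
    {f f' : ℝ → S} {x z x' z' : S} {τ c : ℝ} (hf : IsGeodesicSeg f x z)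
    (hf' : IsGeodesicSeg f' x' z') (hlen : dist x' z' = dist x z)
    (hx' : |dist x' z - dist x z| ≤ c) (hz' : |dist x z' - dist x z| ≤ c)
    (hτ : τ ∈ Icc ((dist x x' + c) / 2) (gromov z z' x)) :
    dist (f τ) (f' τ) ≤ 2 * c + 14 * δ := by
  have hG := hS.gromovHyperbolic hgeo
  have hc := (abs_nonneg _).trans hx'
  rw [abs_le] at hx' hz'
  have hmem : τ ∈ Icc 0 (dist x z) :=
    ⟨by linarith [hτ.1, dist_nonneg (x := x) (y := x')],
      hτ.2.trans ((gromov_le_dist z z' x).trans_eq (dist_comm z x))⟩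
  have hx := hf.dist_left hmem
  have hz := hf.dist_right hmem
  have hnear_z' := hG.dist_le_of_le_gromov (y := z') (by rw [hx, hz]; ring)
    (hx ▸ gromov_comm z z' x ▸ hτ.2)
  have hnear_x' := hG.dist_le_of_le_gromov (x := z) (z := x) (y := x')
    (by rw [dist_comm z (f τ), dist_comm (f τ) x, dist_comm z x, hx, hz]; ring)
    (by rw [dist_comm, hz]; unfold gromov; linarith [hτ.1, dist_comm x z, dist_comm x' z,
      dist_comm x' x])
  have hfar := hS.dist_apply_le_of_abs_sub_le hgeo hf' (t := τ) (p := f τ) (a := c + 6 * δ)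
    (hlen ▸ hmem) ?_ ?_
  · linarith
  · rw [abs_le]
    constructor <;> linarith [dist_triangle x' (f τ) z, dist_comm x' (f τ), dist_comm z x',
      dist_comm z (f τ)]
  · rw [hlen, abs_le]
    constructor <;> linarith [dist_triangle x (f τ) z']

section Action

variable {G : Type*} [Group G] [MulAction G S]

lemma exists_dist_pow_smul_le {g : G} {x : S} (h : IsBounded (range fun n : ℤ => (g ^ n) • x)) :
    ∃ D, ∀ n : ℕ, dist x ((g ^ n) • x) ≤ D := by
  obtain ⟨D, hD⟩ := h.subset_closedBall x
  exact ⟨D, fun n => by simpa [dist_comm] using hD ⟨n, by simp⟩⟩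

lemma exists_le_dist_smul_of_not_isBounded_orbit {x : S}
    (h : ¬IsBounded (MulAction.orbit G x)) (T : ℝ) : ∃ w : G, T ≤ dist x (w • x) := by
  by_contra! hnear
  exact h (Metric.isBounded_closedBall.subset
    (by rintro _ ⟨w, rfl⟩; exact Metric.mem_closedBall'.2 (hnear w).le))

lemma infinite_of_not_isBounded_orbit {x : S} (h : ¬IsBounded (MulAction.orbit G x)) :
    Infinite G := by
  by_contra hfin
  have : Finite G := not_infinite_iff_finite.1 hfin
  exact h (Set.finite_range fun g : G => g • x).isBounded

lemma AcylindricalAction.exists_card_le (h : AcylindricalAction G S) {ε : ℝ} (hε : 0 < ε) :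
    ∃ R > 0, ∃ N : ℕ, ∀ v v' : S, R ≤ dist v v' → ∀ F : Finset G,
      (∀ g ∈ F, dist v (g • v) ≤ ε ∧ dist v' (g • v') ≤ ε) → F.card ≤ N := by
  obtain ⟨R, N, hR, hRN⟩ := h ε hε
  refine ⟨R, hR, N, fun v v' hvv' F hF => ?_⟩
  obtain ⟨hfin, hcard⟩ := hRN v v' hvv'
  calc F.card = (F : Set G).ncard := (Set.ncard_coe_finset F).symm
    _ ≤ N := (Set.ncard_le_ncard hF hfin).trans hcard

variable [IsIsometricSMul G S]

lemma dist_smul_eq_dist_inv_smul (g : G) (a b : S) : dist (g • a) b = dist a (g⁻¹ • b) := by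
  rw [← dist_smul g⁻¹, inv_smul_smul]

lemma gromov_smul (c : G) (x y t : S) : gromov (c • x) (c • y) (c • t) = gromov x y t := by
  simp only [gromov, dist_smul]

namespace GromovHyperbolic

lemma le_dist_smul_prod (hS : GromovHyperbolic S δ) (x : S) (s : ℕ → G) {A : ℝ}
    (hturn : ∀ k, gromov ((s k)⁻¹ • x) (s (k + 1) • x) x ≤ A)
    (hstep : ∀ k, 2 * A + 2 * δ + 1 ≤ dist x (s k • x)) (n : ℕ) :
    (n : ℝ) ≤ dist x (((List.range n).map s).prod • x) := by
  set w : ℕ → G := fun k => ((List.range k).map s).prod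
  have hw : ∀ k, w (k + 1) = w k * s k := fun k => List.prod_range_succ s k
  have hchain := hS.le_dist_of_chain (z := fun k => w k • x) (A := A) (fun k => ?_) (fun k => ?_) n
  · simpa [w] using hchain
  · have hk : w k = w (k + 1) * (s k)⁻¹ := by rw [hw, mul_inv_cancel_right]
    show gromov (w k • x) (w (k + 1 + 1) • x) (w (k + 1) • x) ≤ A
    rw [hk, hw (k + 1), mul_smul, mul_smul, gromov_smul]
    exact hturn k
  · show 2 * A + 2 * δ + 1 ≤ dist (w k • x) (w (k + 1) • x)
    rw [hw, mul_smul, dist_smul]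
    exact hstep k

/-- Since `g h` is elliptic, the zigzag `x, g x, g h x, g h g x, …` cannot be a quasi-geodesic. -/
lemma min_dist_smul_le (hS : GromovHyperbolic S δ) (x : S) (g h : G)
    (hgh : IsBounded (range fun n : ℤ => ((g * h) ^ n) • x)) :
    min (dist x (g • x)) (dist x (h • x)) ≤
      2 * max (gromov (g⁻¹ • x) (h • x) x) (gromov (h⁻¹ • x) (g • x) x) + 2 * δ + 1 := by
  by_contra! hlt
  set s : ℕ → G := fun k => if Even k then g else h
  have hpow : ∀ m, ((List.range (2 * m)).map s).prod = (g * h) ^ m := by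
    intro m
    induction m with
    | zero => simp
    | succ m ih =>
      rw [show 2 * (m + 1) = 2 * m + 1 + 1 by ring, List.prod_range_succ, List.prod_range_succ,
        ih, pow_succ, mul_assoc]
      simp [s]
  have hturn : ∀ k, gromov ((s k)⁻¹ • x) (s (k + 1) • x) x ≤
      max (gromov (g⁻¹ • x) (h • x) x) (gromov (h⁻¹ • x) (g • x) x) := by
    intro k
    rcases Nat.even_or_odd k with hk | hk
    · simp [s, hk, Nat.even_add_one]
    · simp [s, Nat.not_even_iff_odd.2 hk, hk]
  have hstep : ∀ k, 2 * max (gromov (g⁻¹ • x) (h • x) x) (gromov (h⁻¹ • x) (g • x) x) +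
      2 * δ + 1 ≤ dist x (s k • x) := by
    intro k
    have := min_le_left (dist x (g • x)) (dist x (h • x))
    have := min_le_right (dist x (g • x)) (dist x (h • x))
    simp only [s]
    split_ifs <;> linarith
  obtain ⟨D, hD⟩ := exists_dist_pow_smul_le hgh
  obtain ⟨m, hm⟩ := exists_nat_gt D
  have hfar := hS.le_dist_smul_prod x s hturn hstep (2 * m)
  rw [hpow] at hfar
  push_cast at hfar
  linarith [hD m]

lemma half_min_dist_smul_sub_le_gromov (hS : GromovHyperbolic S δ) (x : S)
    (hell : ∀ g : G, IsBounded (range fun n : ℤ => (g ^ n) • x)) (a b : G) :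
    min (dist x (a • x)) (dist x (b • x)) / 2 - (2 * δ + 1) ≤ gromov (a • x) (b • x) x := by
  have ha := hS.min_dist_smul_le x a a (hell _)
  have hb := hS.min_dist_smul_le x b b (hell _)
  have hab := hS.min_dist_smul_le x a b (hell _)
  rw [min_self, max_self] at ha hb
  have hma := min_le_left (dist x (a • x)) (dist x (b • x))
  have hmb := min_le_right (dist x (a • x)) (dist x (b • x))
  rcases le_total (gromov (a⁻¹ • x) (b • x) x) (gromov (b⁻¹ • x) (a • x) x) with hle | hle
  · rw [max_eq_right hle] at hab
    have h4 := hS x (a • x) (b⁻¹ • x) (b • x)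
    rw [gromov_comm (a • x)] at h4
    rcases min_le_iff.1 h4 with h | h <;> linarith
  · rw [max_eq_left hle] at hab
    have h4 := hS x (a • x) (a⁻¹ • x) (b • x)
    rw [gromov_comm (a • x)] at h4
    rcases min_le_iff.1 h4 with h | h <;> linarith

lemma eventually_abs_dist_smul_sub_dist_le (hS : GromovHyperbolic S δ) (x : S)
    (hell : ∀ g : G, IsBounded (range fun n : ℤ => (g ^ n) • x)) (g : G) :
    ∀ᶠ T in atTop, ∀ w : G, T ≤ dist x (w • x) →
      |dist (g • x) (w • x) - dist x (w • x)| ≤ 2 * δ := by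
  obtain ⟨D, hD⟩ := exists_dist_pow_smul_le (hell g)
  have hD0 : 0 ≤ D := by simpa using hD 0
  filter_upwards [eventually_ge_atTop (2 * dist x (g • x) + D + 4 * δ + 2)] with T hT w hw
  set z : ℕ → S := fun k => (g ^ k)⁻¹ • w • x
  set φ : ℕ → ℝ := fun k => dist ((g ^ k) • x) (w • x)
  have hφ : ∀ k, φ k = dist x (z k) := fun k => dist_smul_eq_dist_inv_smul _ _ _
  have hφ_succ : ∀ k, φ (k + 1) = dist (g • x) (z k) := fun k => by
    simp only [φ, z, pow_succ, mul_smul, dist_smul_eq_dist_inv_smul (g ^ k)]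
  refine abs_le_of_abs_sub_sub_le_of_abs_sub_le (φ := φ) (D := D) (fun k => ?_) (fun n => ?_)
  · have hcone := hS.half_min_dist_smul_sub_le_gromov x hell ((g ^ k)⁻¹ * w) w
    rw [mul_smul] at hcone
    have hzk : dist x (w • x) - D ≤ dist x (z k) := by
      rw [← hφ]
      linarith [dist_triangle x ((g ^ k) • x) (w • x), hD k]
    have hfar : dist x (g • x) ≤ gromov (z k) (w • x) x := by
      have := le_min hzk (by linarith : dist x (w • x) - D ≤ dist x (w • x))
      linarith
    have hdir := abs_le.1 (hS.abs_sub_gromov_le hfar)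
    rw [hφ_succ, hφ, abs_le]
    unfold gromov at hdir
    constructor <;> linarith [dist_comm (g • x) x, dist_comm (z k) x, dist_comm (w • x) x]
  · simp only [φ, pow_zero, one_smul]
    exact (abs_dist_sub_le _ _ _).trans (by rw [dist_comm]; exact hD n)

end GromovHyperbolic

lemma RipsHyperbolic.eventually_dist_smul_apply_le (hS : RipsHyperbolic S δ)
    (hgeo : GeodesicMetricSpace S) (x : S)
    (hell : ∀ g : G, IsBounded (range fun n : ℤ => (g ^ n) • x)) (g : G) :
    ∀ᶠ T in atTop, ∀ w : G, T ≤ dist x (w • x) → ∀ γ : ℝ → S, IsGeodesicSeg γ x (w • x) →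
      ∀ τ ∈ Icc ((dist x (g • x) + 6 * δ) / 2) ((dist x (w • x) - 18 * δ - 2) / 2),
        dist (γ τ) (g • γ τ) ≤ 26 * δ := by
  have hG := hS.gromovHyperbolic hgeo
  have hδ := hS.nonneg x
  filter_upwards [hG.eventually_abs_dist_smul_sub_dist_le x hell g,
    hG.eventually_abs_dist_smul_sub_dist_le x hell g⁻¹] with T hg hg' w hw γ hγ τ hτ
  have hgw := hg' w hw
  rw [dist_smul_eq_dist_inv_smul, inv_inv] at hgw
  have hbranch : τ ≤ gromov (w • x) (g • w • x) x := by
    have hcone := hG.half_min_dist_smul_sub_le_gromov x hell w (g * w)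
    rw [mul_smul] at hcone
    have hmin : dist x (w • x) - 6 * δ ≤ min (dist x (w • x)) (dist x (g • w • x)) :=
      le_min (by linarith) (by linarith [(abs_le.1 hgw).1])
    linarith [hτ.2]
  have := hS.dist_apply_apply_le hgeo hγ (hγ.smul g) (dist_smul _ _ _) (hg w hw) hgw
    ⟨by linarith [hτ.1], hbranch⟩
  linarith

end Action

end

theorem stmt_18_general {G S : Type*} [Group G] [MetricSpace S] [MulAction G S]
    [IsIsometricSMul G S] (δ : ℝ)
    (hgeo : GeodesicMetricSpace S) (hhyp : RipsHyperbolic S δ)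
    (hacyl : AcylindricalAction G S)
    (hell : ∀ g : G, ∀ x : S, Bornology.IsBounded (Set.range fun n : ℤ => (g ^ n) • x)) :
    ∀ x : S, Bornology.IsBounded (MulAction.orbit G x) := by
  intro x
  by_contra hunb
  have := infinite_of_not_isBounded_orbit hunb
  have hδ := hhyp.nonneg x
  obtain ⟨R, hR, N, hcard⟩ := hacyl.exists_card_le (ε := 26 * δ + 1) (by linarith)
  obtain ⟨F, hF⟩ := Infinite.exists_subset_card_eq G (N + 1)
  obtain ⟨t, ht0, ht⟩ := ((eventually_ge_atTop 0).and ((eventually_all_finset F).2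
    fun g _ => eventually_ge_atTop ((dist x (g • x) + 6 * δ) / 2))).exists
  obtain ⟨T, hTt, hT⟩ := ((eventually_ge_atTop (2 * (t + R) + 18 * δ + 2)).and
    ((eventually_all_finset F).2 fun g _ =>
      hhyp.eventually_dist_smul_apply_le hgeo x (fun g => hell g x) g)).exists
  obtain ⟨w, hw⟩ := exists_le_dist_smul_of_not_isBounded_orbit hunb T
  obtain ⟨γ, hγ⟩ := hgeo x (w • x)
  have hmoved : ∀ τ ∈ Icc t (t + R), ∀ g ∈ F, dist (γ τ) (g • γ τ) ≤ 26 * δ + 1 :=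
    fun τ hτ g hg => (hT g hg w hw γ hγ τ
      ⟨(ht g hg).trans hτ.1, by linarith [hτ.2]⟩).trans (by linarith)
  have hdist : dist (γ t) (γ (t + R)) = R := by
    rw [hγ.2.2 t ⟨ht0, by linarith⟩ (t + R) ⟨by linarith, by linarith⟩, sub_add_cancel_left,
      abs_neg, abs_of_pos hR]
  have := hcard _ _ hdist.ge F fun g hg =>
    ⟨hmoved t ⟨le_rfl, by linarith⟩ g hg, hmoved (t + R) ⟨by linarith, le_rfl⟩ g hg⟩
  omega

theorem stmt_18 {G S : Type*} [Group G] [MetricSpace S] [MulAction G S]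
    [IsIsometricSMul G S] (δ : ℝ) (hδ : 0 ≤ δ)
    (hgeo : GeodesicMetricSpace S) (hhyp : RipsHyperbolic S δ)
    (hacyl : AcylindricalAction G S)
    (hell : ∀ g : G, ∀ x : S, Bornology.IsBounded (Set.range fun n : ℤ => (g ^ n) • x)) :
    ∀ x : S, Bornology.IsBounded (MulAction.orbit G x) :=
  stmt_18_general δ hgeo hhyp hacyl hell
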